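/- Let B̂ ∈ ℝ^{d×r} have orthonormal columns, V̄ ∈ ℝ^{d×d} positive definite, V = B̂ᵀV̄B̂, and let u ∈ ℝ^r, v ∈ ℝ^d and z = V̄(B̂u - v). Then ‖B̂ᵀz‖²_{V^{-1}} ≤ ‖B̂u - v‖²_{V̄}, where ‖x‖²_M := xᵀMx. -/

import Mathlib

open Matrix BigOperators

noncomputable def enorm {n : ℕ} (v : Fin n → ℝ) : ℝ := Real.sqrt (∑ i, v i ^ 2)

noncomputable def frob {m n : ℕ} (A : Matrix (Fin m) (Fin n) ℝ) : ℝ :=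
  Real.sqrt (∑ i, ∑ j, A i j ^ 2)

noncomputable def opNorm {m n : ℕ} (A : Matrix (Fin m) (Fin n) ℝ) : ℝ :=
  ‖LinearMap.toContinuousLinearMap (Matrix.toEuclideanLin A)‖

noncomputable def wnorm {n : ℕ} (M : Matrix (Fin n) (Fin n) ℝ) (x : Fin n → ℝ) : ℝ :=
  Real.sqrt (x ⬝ᵥ M.mulVec x)

lemma sym_dot {n : ℕ} {M : Matrix (Fin n) (Fin n) ℝ} (hM : Mᵀ = M)
    (x y : Fin n → ℝ) : x ⬝ᵥ M.mulVec y = y ⬝ᵥ M.mulVec x := by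
  rw [Matrix.dotProduct_mulVec, ← Matrix.mulVec_transpose, hM, dotProduct_comm]

lemma cs_psd {n : ℕ} {M : Matrix (Fin n) (Fin n) ℝ} (hM : M.PosSemidef)
    (x y : Fin n → ℝ) :
    (x ⬝ᵥ M.mulVec y) ^ 2 ≤ (x ⬝ᵥ M.mulVec x) * (y ⬝ᵥ M.mulVec y) := by
  have hsym : Mᵀ = M := by
    rw [← Matrix.conjTranspose_eq_transpose_of_trivial]; exact hM.1
  have key : ∀ t : ℝ,
      0 ≤ (x ⬝ᵥ M.mulVec x) * (t * t) + (2 * (x ⬝ᵥ M.mulVec y)) * t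
        + (y ⬝ᵥ M.mulVec y) := by
    intro t
    have h := hM.dotProduct_mulVec_nonneg (y + t • x)
    have hx : star (y + t • x) = y + t • x := by simp
    rw [hx] at h
    have expand : (y + t • x) ⬝ᵥ M.mulVec (y + t • x)
        = (x ⬝ᵥ M.mulVec x) * (t * t) + (2 * (x ⬝ᵥ M.mulVec y)) * t
          + (y ⬝ᵥ M.mulVec y) := by
      have hs := sym_dot hsym x y
      simp only [Matrix.mulVec_add, Matrix.mulVec_smul, add_dotProduct,
        dotProduct_add, smul_dotProduct, dotProduct_smul,
        smul_eq_mul]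
      rw [hs]; ring
    linarith [expand ▸ h]
  have hd := discrim_le_zero key
  rw [discrim] at hd
  nlinarith [hd]

theorem stmt_5 {d r : ℕ} (B : Matrix (Fin d) (Fin r) ℝ) (hB : Bᵀ * B = 1)
    (Vbar : Matrix (Fin d) (Fin d) ℝ) (hVbar : Vbar.PosDef)
    (V : Matrix (Fin r) (Fin r) ℝ) (hV : V = Bᵀ * Vbar * B)
    (u : Fin r → ℝ) (v : Fin d → ℝ) (z : Fin d → ℝ)
    (hz : z = Vbar.mulVec (B.mulVec u - v)) :
    (Bᵀ.mulVec z) ⬝ᵥ V⁻¹.mulVec (Bᵀ.mulVec z) ≤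
      (B.mulVec u - v) ⬝ᵥ Vbar.mulVec (B.mulVec u - v) := by
  set w : Fin d → ℝ := B.mulVec u - v with hw
  -- V is positive definite
  have hVpd : V.PosDef := by
    refine Matrix.PosDef.of_dotProduct_mulVec_pos ?_ ?_
    · have h1 := hVbar.1
      rw [hV]
      unfold Matrix.IsHermitian at *
      rw [Matrix.conjTranspose_mul, Matrix.conjTranspose_mul,
        ← Matrix.conjTranspose_eq_transpose_of_trivial,
        Matrix.conjTranspose_conjTranspose, h1, Matrix.mul_assoc]
    · intro x hx
      have hBx : B.mulVec x ≠ 0 := by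
        intro h0
        apply hx
        have : (Bᵀ * B).mulVec x = Bᵀ.mulVec (B.mulVec x) := by
          rw [Matrix.mulVec_mulVec]
        rw [hB, h0, Matrix.mulVec_zero] at this
        simpa using this
      have h2 := hVbar.dotProduct_mulVec_pos hBx
      have e : x ⬝ᵥ V.mulVec x = (B.mulVec x) ⬝ᵥ Vbar.mulVec (B.mulVec x) := by
        rw [hV, ← Matrix.mulVec_mulVec, ← Matrix.mulVec_mulVec,
          Matrix.dotProduct_mulVec, Matrix.vecMul_transpose]
      simpa [e] using h2
  have hsymVbar : Vbarᵀ = Vbar := by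
    rw [← Matrix.conjTranspose_eq_transpose_of_trivial]; exact hVbar.1
  -- notation
  set q : Fin r → ℝ := Bᵀ.mulVec z with hq
  set y : Fin r → ℝ := V⁻¹.mulVec q with hy
  set s : Fin d → ℝ := B.mulVec y with hs
  have hVdet : IsUnit V.det := Matrix.isUnit_iff_isUnit_det V |>.1 hVpd.isUnit
  have hVy : V.mulVec y = q := by
    rw [hy, Matrix.mulVec_mulVec, Matrix.mul_nonsing_inv V hVdet, Matrix.one_mulVec]
  have key1 : q ⬝ᵥ y = (B.mulVec u - v) ⬝ᵥ Vbar.mulVec s := by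
    rw [hq, Matrix.mulVec_transpose, ← Matrix.dotProduct_mulVec]
    -- now : z ⬝ᵥ B *ᵥ y = w ⬝ᵥ Vbar *ᵥ s
    rw [hz, ← hs, dotProduct_comm, sym_dot hsymVbar, ← hw]
  have key2 : s ⬝ᵥ Vbar.mulVec s = q ⬝ᵥ y := by
    have e2 : y ⬝ᵥ V.mulVec y = s ⬝ᵥ Vbar.mulVec s := by
      rw [hV, ← Matrix.mulVec_mulVec, ← Matrix.mulVec_mulVec,
        Matrix.dotProduct_mulVec, Matrix.vecMul_transpose, ← hs]
    rw [← e2, hVy, dotProduct_comm]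
  have hA0 : 0 ≤ q ⬝ᵥ y := by
    rw [← key2]
    simpa using hVbar.posSemidef.dotProduct_mulVec_nonneg s
  have hR0 : 0 ≤ (B.mulVec u - v) ⬝ᵥ Vbar.mulVec (B.mulVec u - v) := by
    simpa using hVbar.posSemidef.dotProduct_mulVec_nonneg (B.mulVec u - v)
  have hcs := cs_psd hVbar.posSemidef (B.mulVec u - v) s
  rw [← key1, key2] at hcs
  -- hcs : (q ⬝ᵥ y)^2 ≤ R * (q ⬝ᵥ y)
  show q ⬝ᵥ y ≤ _
  rcases eq_or_lt_of_le hA0 with h|h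
  · linarith
  · nlinarith [hcs]
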